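/- Let 0 < k < n-1, let m < n, and let AU_{k,n}(q,X) be the almost uniform q-matroid on F_q^n obtained from the uniform q-matroid of rank k by declaring a single k-dimensional subspace X to have rank k-1. If an F_q-linear rank-metric code C ⊆ F_q^{n×m} represents AU_{k,n}(q,X), then m = n-1, dim C = k(n-1), and the minimum rank distance of C is n-k. -/

import Mathlib

/-!
The rank function forces `dim C = k m` and `C(U^⊥) = 0` whenever `U ≠ X` has dimension `≥ k`;
hence every nonzero codeword has rank `≥ n - k`, while `dim C(X^⊥) = m > 0` produces a codeword
of rank exactly `n - k`, so `d(C) = n - k`. Puncturing `C` along a vector `e ∉ X^⊥` (a map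
`F^n → F^{n-1}` with kernel `⟨e⟩`) is injective on `C` and loses no rank, because a codeword of
rank `n - k` whose column space contained `e` would lie in `C(W)` with `W^⊥ ≠ X`. The Singleton
bound for the punctured code in `F^{(n-1) × m}` reads `k m ≤ (n - 1)(m - n + k + 1)`, which for
`k < n - 1` forces `m ≥ n - 1`.
-/

open Matrix

variable {F : Type*} [Field F]

/-- Column space of a matrix: the span of its columns. -/
def colSpace {n m : ℕ} (M : Matrix (Fin n) (Fin m) F) : Submodule F (Fin n → F) :=
  Submodule.span F (Set.range Mᵀ)

lemma colSpace_le_iff {n m : ℕ} (M : Matrix (Fin n) (Fin m) F) (U : Submodule F (Fin n → F)) :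
    colSpace M ≤ U ↔ ∀ j, Mᵀ j ∈ U := by
  rw [colSpace, Submodule.span_le]
  exact ⟨fun h j => h ⟨j, rfl⟩, fun h _ ⟨j, hj⟩ => hj ▸ h j⟩

/-- `C(U)`: the codewords of `C` whose column space is contained in `U`. -/
def codeCU {n m : ℕ} (C : Submodule F (Matrix (Fin n) (Fin m) F))
    (U : Submodule F (Fin n → F)) : Submodule F (Matrix (Fin n) (Fin m) F) where
  carrier := {M | M ∈ C ∧ colSpace M ≤ U}
  add_mem' := by
    rintro a b ⟨haC, ha⟩ ⟨hbC, hb⟩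
    refine ⟨C.add_mem haC hbC, (colSpace_le_iff _ _).2 fun j => ?_⟩
    have h := U.add_mem ((colSpace_le_iff a U).1 ha j) ((colSpace_le_iff b U).1 hb j)
    exact h
  zero_mem' := by
    exact ⟨C.zero_mem, (colSpace_le_iff _ _).2 fun j => U.zero_mem⟩
  smul_mem' := by
    rintro c a ⟨haC, ha⟩
    refine ⟨C.smul_mem c haC, (colSpace_le_iff _ _).2 fun j => ?_⟩
    have h := U.smul_mem c ((colSpace_le_iff a U).1 ha j)
    exact h

/-- Orthogonal complement with respect to the standard (dot-product) bilinear form. -/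
def perp {n : ℕ} (U : Submodule F (Fin n → F)) : Submodule F (Fin n → F) where
  carrier := {v | ∀ u ∈ U, v ⬝ᵥ u = 0}
  add_mem' := by
    intro a b ha hb u hu
    rw [add_dotProduct, ha u hu, hb u hu, add_zero]
  zero_mem' := by
    intro u hu
    rw [zero_dotProduct]
  smul_mem' := by
    intro c a ha u hu
    rw [smul_dotProduct, ha u hu, smul_zero]

/-- The minimum rank distance of a matrix code. -/
noncomputable def minRankDist {n m : ℕ} (C : Submodule F (Matrix (Fin n) (Fin m) F)) : ℕ :=
  sInf {r : ℕ | ∃ M ∈ C, M ≠ 0 ∧ M.rank = r}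

/-- The rank function of the q-polymatroid associated to a matrix rank-metric code. -/
noncomputable def rhoCode {n m : ℕ} (C : Submodule F (Matrix (Fin n) (Fin m) F))
    (U : Submodule F (Fin n → F)) : ℚ :=
  ((Module.finrank F C : ℚ) - (Module.finrank F (codeCU C (perp U)) : ℚ)) / (m : ℚ)

open Module

lemma mem_perp {n : ℕ} {U : Submodule F (Fin n → F)} {v : Fin n → F} :
    v ∈ perp U ↔ ∀ u ∈ U, v ⬝ᵥ u = 0 := Iff.rfl

lemma perp_eq_comap_dualAnnihilator {n : ℕ} (U : Submodule F (Fin n → F)) :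
    perp U = U.dualAnnihilator.comap (dotProductEquiv F (Fin n)).toLinearMap := by
  ext v
  simp [mem_perp, Submodule.mem_dualAnnihilator]

lemma finrank_perp_add_finrank {n : ℕ} (U : Submodule F (Fin n → F)) :
    finrank F (perp U) + finrank F U = n := by
  rw [perp_eq_comap_dualAnnihilator, Submodule.comap_equiv_eq_map_symm,
    LinearEquiv.finrank_map_eq, add_comm, Subspace.finrank_add_finrank_dualAnnihilator_eq,
    finrank_fin_fun]

lemma le_perp_perp {n : ℕ} (U : Submodule F (Fin n → F)) : U ≤ perp (perp U) :=
  fun u hu v hv => by rw [dotProduct_comm]; exact hv u hu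

lemma colSpace_eq_range {n m : ℕ} (M : Matrix (Fin n) (Fin m) F) :
    colSpace M = LinearMap.range M.mulVecLin :=
  (Matrix.range_mulVecLin M).symm

lemma rank_eq_finrank_colSpace {n m : ℕ} (M : Matrix (Fin n) (Fin m) F) :
    M.rank = finrank F (colSpace M) := by
  rw [colSpace_eq_range, Matrix.rank]

lemma colSpace_mul {l n m : ℕ} (P : Matrix (Fin l) (Fin n) F) (M : Matrix (Fin n) (Fin m) F) :
    colSpace (P * M) = (colSpace M).map P.mulVecLin := by
  rw [colSpace_eq_range, colSpace_eq_range, Matrix.mulVecLin_mul, LinearMap.range_comp]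

lemma codeCU_mono {n m : ℕ} (C : Submodule F (Matrix (Fin n) (Fin m) F))
    {U V : Submodule F (Fin n → F)} (h : U ≤ V) : codeCU C U ≤ codeCU C V :=
  fun _ hM => ⟨hM.1, hM.2.trans h⟩

lemma codeCU_bot {n m : ℕ} (C : Submodule F (Matrix (Fin n) (Fin m) F)) :
    codeCU C ⊥ = ⊥ := by
  refine eq_bot_iff.2 fun M ⟨_, hM⟩ => (Submodule.mem_bot F).2 ?_
  ext i j
  exact congrFun ((Submodule.mem_bot F).1 ((colSpace_le_iff M ⊥).1 hM j)) i

lemma finrank_map_add_finrank_inf_ker {K V W : Type*} [Field K] [AddCommGroup V] [Module K V]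
    [FiniteDimensional K V] [AddCommGroup W] [Module K W] (f : V →ₗ[K] W) (U : Submodule K V) :
    finrank K (U.map f) + finrank K ↥(U ⊓ LinearMap.ker f) = finrank K U := by
  rw [← LinearMap.range_domRestrict, ← Submodule.map_comap_subtype,
    Submodule.finrank_map_subtype_eq, ← LinearMap.ker_domRestrict,
    LinearMap.finrank_range_add_finrank_ker]

/-- Singleton-type bound: deleting the columns in `S` is injective on `D`. -/
theorem finrank_le_of_card_lt_rank {ι κ : Type*} [Fintype ι] [Fintype κ] [DecidableEq κ]
    (D : Submodule F (Matrix ι κ F)) (S : Finset κ) (hD : ∀ M ∈ D, M ≠ 0 → S.card < M.rank) :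
    finrank F D ≤ Fintype.card ι * (Fintype.card κ - S.card) := by
  let delete : Matrix ι κ F →ₗ[F] Matrix ι (Sᶜ : Finset κ) F :=
    { toFun := fun M => M.submatrix id Subtype.val
      map_add' := fun _ _ => rfl
      map_smul' := fun _ _ => rfl }
  have hinj : Function.Injective (delete.domRestrict D) := by
    rw [← LinearMap.ker_eq_bot, eq_bot_iff]
    rintro ⟨M, hM⟩ hdel
    replace hdel : M.submatrix id Subtype.val = (0 : Matrix ι (Sᶜ : Finset κ) F) :=
      LinearMap.mem_ker.1 hdel
    rw [Submodule.mem_bot, Submodule.mk_eq_zero]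
    by_contra hM0
    refine (hD M hM hM0).not_ge ?_
    rw [← Matrix.rank_transpose]
    refine Matrix.rank_le_card_of_support_subset _ _ fun j hj => ?_
    by_contra hjS
    refine hj (funext fun i => ?_)
    exact congrFun (congrFun hdel i) ⟨j, Finset.mem_compl.2 hjS⟩
  calc finrank F D ≤ finrank F (Matrix ι (Sᶜ : Finset κ) F) :=
        LinearMap.finrank_le_finrank_of_injective hinj
    _ = Fintype.card ι * (Fintype.card κ - S.card) := by
        rw [finrank_matrix, Fintype.card_coe, Finset.card_compl, finrank_self, mul_one]

lemma exists_ker_mulVecLin_eq_span_singleton {n : ℕ} {e : Fin n → F} (he : e ≠ 0) :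
    ∃ P : Matrix (Fin (n - 1)) (Fin n) F, LinearMap.ker P.mulVecLin = F ∙ e := by
  have hdim : finrank F ((Fin n → F) ⧸ F ∙ e) = finrank F (Fin (n - 1) → F) := by
    have := Submodule.finrank_quotient_add_finrank (F ∙ e)
    rw [finrank_span_singleton he, finrank_fin_fun] at this
    rw [finrank_fin_fun]
    omega
  refine ⟨LinearMap.toMatrix' ((LinearEquiv.ofFinrankEq _ _ hdim).toLinearMap ∘ₗ (F ∙ e).mkQ), ?_⟩
  rw [← Matrix.toLin'_apply', Matrix.toLin'_toMatrix', LinearEquiv.ker_comp, Submodule.ker_mkQ]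

lemma perp_top {n : ℕ} : perp (⊤ : Submodule F (Fin n → F)) = ⊥ := by
  have h := finrank_perp_add_finrank (⊤ : Submodule F (Fin n → F))
  rw [finrank_top, finrank_fin_fun] at h
  exact Submodule.finrank_eq_zero.1 (by omega)

lemma minRankDist_eq {n m d : ℕ} {C : Submodule F (Matrix (Fin n) (Fin m) F)}
    (hex : ∃ M ∈ C, M ≠ 0 ∧ M.rank = d) (hle : ∀ M ∈ C, M ≠ 0 → d ≤ M.rank) :
    minRankDist C = d := by
  refine le_antisymm (Nat.sInf_le hex) (le_csInf ⟨d, hex⟩ ?_)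
  rintro r ⟨M, hM, hM0, rfl⟩
  exact hle M hM hM0

def Represents {n m : ℕ} (C : Submodule F (Matrix (Fin n) (Fin m) F))
    (ρ : Submodule F (Fin n → F) → ℕ) : Prop :=
  ∀ U, rhoCode C U = ρ U

open scoped Classical in
noncomputable def almostUniformRank {n : ℕ} (k : ℕ) (X U : Submodule F (Fin n → F)) : ℕ :=
  if U = X then k - 1 else min (finrank F U) k

namespace Represents

variable {n m k : ℕ} {C : Submodule F (Matrix (Fin n) (Fin m) F)}

lemma finrank_codeCU_perp_add {ρ : Submodule F (Fin n → F) → ℕ} (hC : Represents C ρ)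
    (hm : m ≠ 0) (U : Submodule F (Fin n → F)) :
    finrank F (codeCU C (perp U)) + ρ U * m = finrank F C := by
  have h := hC U
  rw [rhoCode, div_eq_iff (Nat.cast_ne_zero.2 hm)] at h
  exact_mod_cast (by linarith : (finrank F (codeCU C (perp U)) : ℚ) + ρ U * m = finrank F C)

lemma finrank_eq {ρ : Submodule F (Fin n → F) → ℕ} (hC : Represents C ρ) (hm : m ≠ 0) :
    finrank F C = ρ ⊤ * m := by
  rw [← hC.finrank_codeCU_perp_add hm ⊤, perp_top, codeCU_bot, finrank_bot, zero_add]

variable {X : Submodule F (Fin n → F)}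

lemma almostUniform_finrank_eq (hC : Represents C (almostUniformRank k X)) (hm : m ≠ 0)
    (hX : finrank F X = k) (hkn : k < n) : finrank F C = k * m := by
  have hXtop : (⊤ : Submodule F (Fin n → F)) ≠ X := by
    rintro rfl
    rw [finrank_top, finrank_fin_fun] at hX
    omega
  rw [hC.finrank_eq hm, almostUniformRank, if_neg hXtop, finrank_top, finrank_fin_fun,
    min_eq_right hkn.le]

lemma almostUniform_codeCU_perp_eq_bot (hC : Represents C (almostUniformRank k X)) (hm : m ≠ 0)
    (hX : finrank F X = k) (hkn : k < n) {U : Submodule F (Fin n → F)} (hUX : U ≠ X)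
    (hkU : k ≤ finrank F U) : codeCU C (perp U) = ⊥ := by
  have h := hC.finrank_codeCU_perp_add hm U
  rw [hC.almostUniform_finrank_eq hm hX hkn, almostUniformRank, if_neg hUX,
    min_eq_right hkU] at h
  exact Submodule.finrank_eq_zero.1 (by omega)

lemma almostUniform_codeCU_eq_bot (hC : Represents C (almostUniformRank k X)) (hm : m ≠ 0)
    (hX : finrank F X = k) (hkn : k < n) {W : Submodule F (Fin n → F)} (hWX : perp W ≠ X)
    (hW : finrank F W + k ≤ n) : codeCU C W = ⊥ := by
  have h := finrank_perp_add_finrank W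
  refine eq_bot_iff.2 ((codeCU_mono C (le_perp_perp W)).trans ?_)
  exact (hC.almostUniform_codeCU_perp_eq_bot hm hX hkn hWX (by omega)).le

lemma almostUniform_le_rank (hC : Represents C (almostUniformRank k X)) (hm : m ≠ 0)
    (hX : finrank F X = k) (hkn : k < n) {M : Matrix (Fin n) (Fin m) F} (hM : M ∈ C)
    (hM0 : M ≠ 0) : n - k ≤ M.rank := by
  by_contra! hlt
  rw [rank_eq_finrank_colSpace] at hlt
  have hperp := finrank_perp_add_finrank (colSpace M)
  have hWX : perp (colSpace M) ≠ X := fun h => by rw [h, hX] at hperp; omega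
  have hbot := hC.almostUniform_codeCU_eq_bot hm hX hkn hWX (by omega)
  exact hM0 ((Submodule.mem_bot F).1 (hbot ▸ ⟨hM, le_rfl⟩))

lemma almostUniform_exists_rank_eq (hC : Represents C (almostUniformRank k X)) (hm : m ≠ 0)
    (hX : finrank F X = k) (hk0 : 0 < k) (hkn : k < n) :
    ∃ M ∈ C, M ≠ 0 ∧ M.rank = n - k := by
  have h := hC.finrank_codeCU_perp_add hm X
  rw [hC.almostUniform_finrank_eq hm hX hkn, almostUniformRank, if_pos rfl] at h
  have hdim : finrank F (codeCU C (perp X)) ≠ 0 := by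
    obtain ⟨k', rfl⟩ := Nat.exists_eq_add_of_lt hk0
    simp only [add_tsub_cancel_right, add_mul] at h
    omega
  obtain ⟨M, hM, hM0⟩ := Submodule.exists_mem_ne_zero_of_ne_bot
    fun h : codeCU C (perp X) = ⊥ => hdim (by rw [h, finrank_bot])
  refine ⟨M, hM.1, hM0, le_antisymm ?_ (hC.almostUniform_le_rank hm hX hkn hM.1 hM0)⟩
  have hperp := finrank_perp_add_finrank X
  rw [rank_eq_finrank_colSpace]
  exact (Submodule.finrank_mono hM.2).trans (by omega)

lemma almostUniform_notMem_colSpace (hC : Represents C (almostUniformRank k X)) (hm : m ≠ 0)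
    (hX : finrank F X = k) (hkn : k < n) {M : Matrix (Fin n) (Fin m) F} (hM : M ∈ C)
    (hM0 : M ≠ 0) (hrank : M.rank = n - k) {e : Fin n → F} (he : e ∉ perp X) :
    e ∉ colSpace M := by
  intro heM
  have hWX : perp (colSpace M) ≠ X := fun h => he (h ▸ le_perp_perp _ heM)
  have hbot := hC.almostUniform_codeCU_eq_bot hm hX hkn hWX
    (by rw [← rank_eq_finrank_colSpace, hrank]; omega)
  exact hM0 ((Submodule.mem_bot F).1 (hbot ▸ ⟨hM, le_rfl⟩))

lemma almostUniform_le_rank_mul (hC : Represents C (almostUniformRank k X)) (hm : m ≠ 0)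
    (hX : finrank F X = k) (hkn : k < n) {l : ℕ} {P : Matrix (Fin l) (Fin n) F} {e : Fin n → F}
    (hP : LinearMap.ker P.mulVecLin = F ∙ e) (he : e ∉ perp X) {M : Matrix (Fin n) (Fin m) F}
    (hM : M ∈ C) (hM0 : M ≠ 0) : n - k ≤ (P * M).rank := by
  have he0 : e ≠ 0 := fun h => he (h ▸ (perp X).zero_mem)
  have hrank := hC.almostUniform_le_rank hm hX hkn hM hM0
  have hsplit := finrank_map_add_finrank_inf_ker P.mulVecLin (colSpace M)
  rw [hP, ← colSpace_mul, ← rank_eq_finrank_colSpace] at hsplit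
  rw [rank_eq_finrank_colSpace] at hrank
  rcases hrank.lt_or_eq with hlt | heq
  · have hle : finrank F ↥(colSpace M ⊓ F ∙ e) ≤ 1 :=
      (Submodule.finrank_mono inf_le_right).trans (finrank_span_singleton he0).le
    omega
  · have heM := hC.almostUniform_notMem_colSpace hm hX hkn hM hM0
      (by rw [rank_eq_finrank_colSpace, heq]) he
    rw [disjoint_iff.1 ((Submodule.disjoint_span_singleton' he0).2 heM), finrank_bot] at hsplit
    omega

lemma almostUniform_mul_le (hC : Represents C (almostUniformRank k X)) (hm : m ≠ 0)
    (hX : finrank F X = k) (hk0 : 0 < k) (hkn : k < n) (hnkm : n - k ≤ m) :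
    k * m ≤ (n - 1) * (m - (n - k - 1)) := by
  have hperp := finrank_perp_add_finrank X
  obtain ⟨e, he⟩ : ∃ e, e ∉ perp X := by
    by_contra! h
    rw [(Submodule.eq_top_iff'.2 h), finrank_top, finrank_fin_fun] at hperp
    omega
  obtain ⟨P, hP⟩ := exists_ker_mulVecLin_eq_span_singleton fun h : e = 0 => he (h ▸ zero_mem _)
  have hrank : ∀ M ∈ C, M ≠ 0 → n - k ≤ (P * M).rank :=
    fun M hM hM0 => hC.almostUniform_le_rank_mul hm hX hkn hP he hM hM0
  let D := C.map (mulLeftLinearMap (Fin m) F P)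
  have hDC : finrank F D = finrank F C := by
    have hsplit := finrank_map_add_finrank_inf_ker (mulLeftLinearMap (Fin m) F P) C
    suffices C ⊓ LinearMap.ker (mulLeftLinearMap (Fin m) F P) = ⊥ by
      rwa [this, finrank_bot, add_zero] at hsplit
    refine eq_bot_iff.2 fun M ⟨hM, hPM⟩ => (Submodule.mem_bot F).2 (by_contra fun hM0 => ?_)
    have := hrank M hM hM0
    replace hPM : P * M = 0 := hPM
    rw [hPM, Matrix.rank_zero] at this
    omega
  obtain ⟨S, -, hS⟩ : ∃ S ⊆ (Finset.univ : Finset (Fin m)), S.card = n - k - 1 :=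
    Finset.exists_subset_card_eq (by rw [Finset.card_univ, Fintype.card_fin]; omega)
  have hD : ∀ M ∈ D, M ≠ 0 → S.card < M.rank := by
    rintro _ ⟨M, hM, rfl⟩ hPM0
    have hM0 : M ≠ 0 := by rintro rfl; exact hPM0 (by simp)
    have := hrank M hM hM0
    rw [hS]
    simp only [mulLeftLinearMap_apply]
    omega
  have := finrank_le_of_card_lt_rank D S hD
  rwa [hDC, hC.almostUniform_finrank_eq hm hX hkn, Fintype.card_fin, Fintype.card_fin, hS] at this

end Represents

open scoped Classical in
theorem almost_uniform_parameters_general {n m k : ℕ}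
    (hk0 : 0 < k) (hk : k < n - 1) (hm0 : 0 < m) (hmn : m < n)
    (X : Submodule F (Fin n → F)) (hX : Module.finrank F X = k)
    (C : Submodule F (Matrix (Fin n) (Fin m) F))
    (hrep : ∀ U : Submodule F (Fin n → F),
      rhoCode C U = if U = X then ((k - 1 : ℕ) : ℚ)
        else ((min (Module.finrank F U) k : ℕ) : ℚ)) :
    m = n - 1 ∧ Module.finrank F C = k * (n - 1) ∧ minRankDist C = n - k := by
  have hkn : k < n := by omega
  have hm : m ≠ 0 := hm0.ne'
  have hC : Represents C (almostUniformRank k X) := fun U => by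
    rw [hrep U, almostUniformRank]
    split_ifs <;> rfl
  obtain ⟨M₀, hM₀, hM₀0, hM₀rank⟩ := hC.almostUniform_exists_rank_eq hm hX hk0 hkn
  have hnkm : n - k ≤ m := hM₀rank ▸ M₀.rank_le_width
  have hmul := hC.almostUniform_mul_le hm hX hk0 hkn hnkm
  have hmn1 : m = n - 1 := by
    have hk_le : k ≤ m - (n - k - 1) := by
      refine Nat.le_of_mul_le_mul_left (c := n - 1 - k) ?_ (by omega)
      have hm_split : m = (n - 1 - k) + (m - (n - k - 1)) := by omega
      have hn_split : n - 1 = (n - 1 - k) + k := by omega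
      nlinarith
    omega
  refine ⟨hmn1, by rw [hC.almostUniform_finrank_eq hm hX hkn, hmn1], ?_⟩
  exact minRankDist_eq ⟨M₀, hM₀, hM₀0, hM₀rank⟩ fun M hM hM0 =>
    hC.almostUniform_le_rank hm hX hkn hM hM0

open scoped Classical in
/-- a matrix rank-metric code with `m < n` representing the almost uniform
q-matroid `AU_{k,n}(q,X)` must have `m = n-1`, dimension `k(n-1)`, and minimum rank
distance `n-k`. -/
theorem almost_uniform_parameters [Fintype F] {n m k : ℕ}
    (hk0 : 0 < k) (hk : k < n - 1) (hm0 : 0 < m) (hmn : m < n)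
    (X : Submodule F (Fin n → F)) (hX : Module.finrank F X = k)
    (C : Submodule F (Matrix (Fin n) (Fin m) F))
    (hrep : ∀ U : Submodule F (Fin n → F),
      rhoCode C U = if U = X then ((k - 1 : ℕ) : ℚ)
        else ((min (Module.finrank F U) k : ℕ) : ℚ)) :
    m = n - 1 ∧ Module.finrank F C = k * (n - 1) ∧ minRankDist C = n - k :=
  almost_uniform_parameters_general hk0 hk hm0 hmn X hX C hrep
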